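/- Let B be a right nilpotent skew brace. If A is a sub skew brace of B such that A + B² = B (every element of B is a sum a + x with a ∈ A and x ∈ B²) and A*B ⊆ A, then A = B. Here B² = B*B. -/

import Mathlib

/-- A skew brace: a type with two group structures `(B,+)` and `(B,∘)`
(the multiplicative group is written with `*`) sharing the same underlying set,
such that `a ∘ (b + c) = a ∘ b - a + a ∘ c`. -/
class SkewBrace (B : Type*) extends AddGroup B, Group B where
  circ_add : ∀ a b c : B, a * (b + c) = a * b - a + a * c

namespace SkewBrace

variable {B : Type*} [SkewBrace B]

/-- `lam a b = -a + a ∘ b`, i.e. `λ_a(b)`. -/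
def lam (a b : B) : B := -a + a * b

/-- `a * b` (the star operation) `= λ_a(b) - b = -a + a ∘ b - b`. -/
def starOp (a b : B) : B := -a + a * b - b

/-- `X * Y` : the additive subgroup generated by all `x * y`, `x ∈ X`, `y ∈ Y`,
regarded as a set. -/
def starSpan (X Y : Set B) : Set B :=
  (AddSubgroup.closure {z : B | ∃ x ∈ X, ∃ y ∈ Y, z = starOp x y} : AddSubgroup B)

/-- `[X,Y]₊` : the additive subgroup generated by all additive commutators
`x + y - x - y`, `x ∈ X`, `y ∈ Y`, regarded as a set. -/
def addCommSpan (X Y : Set B) : Set B :=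
  (AddSubgroup.closure {z : B | ∃ x ∈ X, ∃ y ∈ Y, z = x + y - x - y} : AddSubgroup B)

/-- A sub skew brace: a subset containing `0` and closed under both group
operations and both inverses. -/
def IsSubSkewBrace (S : Set B) : Prop :=
  0 ∈ S ∧ (∀ a ∈ S, ∀ b ∈ S, a + b ∈ S) ∧ (∀ a ∈ S, -a ∈ S) ∧
    (∀ a ∈ S, ∀ b ∈ S, a * b ∈ S) ∧ (∀ a ∈ S, a⁻¹ ∈ S)

/-- An ideal: a sub skew brace that is normal in `(B,+)` and in `(B,∘)` and
invariant under all `λ_a`. -/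
def IsIdeal (S : Set B) : Prop :=
  IsSubSkewBrace S ∧ (∀ a : B, ∀ i ∈ S, a + i - a ∈ S) ∧
    (∀ a : B, ∀ i ∈ S, a * i * a⁻¹ ∈ S) ∧ (∀ a : B, ∀ i ∈ S, lam a i ∈ S)

/-- The annihilator `Ann(B) = {x | x∘a = a∘x = x+a = a+x for all a}`. -/
def annSet (B : Type*) [SkewBrace B] : Set B :=
  {x | ∀ a : B, x * a = a * x ∧ x * a = x + a ∧ x + a = a + x}

/-- The annihilator series: `Ann₀(B) = 0` and `Ann_{n+1}(B)` is the preimage of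
`Ann(B/Annₙ(B))` under the quotient map; membership is expressed via coset
equalities modulo `Annₙ(B)`. -/
def annSeries (B : Type*) [SkewBrace B] : ℕ → Set B
  | 0 => {0}
  | n + 1 => {x | ∀ a : B,
      x * a - a * x ∈ annSeries B n ∧
      x * a - (x + a) ∈ annSeries B n ∧
      (x + a) - (a + x) ∈ annSeries B n}

/-- `B` is annihilator nilpotent if `Annₙ(B) = B` for some `n`. -/
def AnnNilpotent (B : Type*) [SkewBrace B] : Prop :=
  ∃ n : ℕ, annSeries B n = Set.univ

/-- `leftPow B n` is `B^{n+1}`: `B¹ = B`, `B^{n+1} = B * Bⁿ`. -/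
def leftPow (B : Type*) [SkewBrace B] : ℕ → Set B
  | 0 => Set.univ
  | n + 1 => starSpan Set.univ (leftPow B n)

/-- `rightPow B n` is `B⁽ⁿ⁺¹⁾`: `B⁽¹⁾ = B`, `B⁽ⁿ⁺¹⁾ = B⁽ⁿ⁾ * B`. -/
def rightPow (B : Type*) [SkewBrace B] : ℕ → Set B
  | 0 => Set.univ
  | n + 1 => starSpan (rightPow B n) Set.univ

/-- `B` is left nilpotent if `Bⁿ = 0` for some `n ≥ 1`. -/
def LeftNilpotent (B : Type*) [SkewBrace B] : Prop :=
  ∃ n : ℕ, leftPow B n = ({0} : Set B)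

/-- `B` is right nilpotent if `B⁽ⁿ⁾ = 0` for some `n ≥ 1`. -/
def RightNilpotent (B : Type*) [SkewBrace B] : Prop :=
  ∃ n : ℕ, rightPow B n = ({0} : Set B)

/-- `strongPow B n` is `B^[n+1]`: `B^[1] = B`, and `B^[n+1]` is the additive
subgroup generated by `⋃_{i=1}^{n} B^[i] * B^[n+1-i]`. -/
def strongPow (B : Type*) [SkewBrace B] : ℕ → Set B
  | 0 => Set.univ
  | n + 1 => (AddSubgroup.closure (⋃ j : Fin (n + 1),
      {z : B | ∃ x ∈ strongPow B j.1, ∃ y ∈ strongPow B (n - j.1), z = starOp x y}) :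
        AddSubgroup B)
  decreasing_by
  · exact j.isLt
  · omega

/-- `B` is strongly nilpotent if `B^[n] = 0` for some `n ≥ 1`. -/
def StronglyNilpotent (B : Type*) [SkewBrace B] : Prop :=
  ∃ n : ℕ, strongPow B n = ({0} : Set B)

/-- `gammaAux B n` is `Γ_[n+1](B)`: `Γ_[1](B) = B` and, for `n ≥ 2`, `Γ_[n](B)` is
the additive subgroup generated by the sets `Γ_[i](B) * Γ_[n-i](B)` and
`[Γ_[i](B), Γ_[n-i](B)]₊` for `1 ≤ i ≤ n-1`. -/
def gammaAux (B : Type*) [SkewBrace B] : ℕ → Set B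
  | 0 => Set.univ
  | n + 1 => (AddSubgroup.closure (⋃ j : Fin (n + 1),
      {z : B | ∃ x ∈ gammaAux B j.1, ∃ y ∈ gammaAux B (n - j.1),
        z = starOp x y ∨ z = x + y - x - y}) : AddSubgroup B)
  decreasing_by
  · exact j.isLt
  · omega

/-- `Γ_[n](B)` for `n ≥ 1` (one-based indexing as in the paper). -/
def gammaBr (B : Type*) [SkewBrace B] (n : ℕ) : Set B := gammaAux B (n - 1)

/-- `B` is finitely generated as a skew brace: there is a finite subset whose
smallest containing sub skew brace is `B` itself. -/
def SBFinitelyGenerated (B : Type*) [SkewBrace B] : Prop :=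
  ∃ S : Set B, S.Finite ∧ ∀ T : Set B, IsSubSkewBrace T → S ⊆ T → T = Set.univ

/-- `B` satisfies the ascending chain condition on sub skew braces. -/
def ACCSubSkewBrace (B : Type*) [SkewBrace B] : Prop :=
  ∀ f : ℕ → Set B, (∀ n, IsSubSkewBrace (f n)) → (∀ n, f n ⊆ f (n + 1)) →
    ∃ N : ℕ, ∀ n, N ≤ n → f n = f N

/-!
By induction on `m`, `B = A + B⁽ᵐ⁾` for every `m`. Writing `c = a + y = a ∘ λ_a⁻¹(y)` with
`a ∈ A`, `y ∈ B⁽ᵐ⁾`, the identity `(a ∘ y) * d = a * (y * d) + y * d + a * d` puts every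
generator `c * d` of `B²` into `A + B⁽ᵐ⁺¹⁾`, so `B = A + B² ⊆ A + B⁽ᵐ⁺¹⁾`. This uses that each
`B⁽ᵐ⁾` is normal in `(B,+)` and `λ`-invariant; `λ`-invariance of `B⁽ᵐ⁺¹⁾` follows from
`λ_a(x * y) = (a ∘ x ∘ a⁻¹) * λ_a(y)` and normality of `B⁽ᵐ⁾` in `(B,∘)`, which in turn follows
from its `λ`-invariance and additive normality. Right nilpotency then gives `A = B`.
-/

def IsSubSkewBrace.toAddSubgroup {S : Set B} (hS : IsSubSkewBrace S) : AddSubgroup B where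
  carrier := S
  zero_mem' := hS.1
  add_mem' ha hb := hS.2.1 _ ha _ hb
  neg_mem' ha := hS.2.2.1 _ ha

@[simp]
lemma IsSubSkewBrace.coe_toAddSubgroup {S : Set B} (hS : IsSubSkewBrace S) :
    (hS.toAddSubgroup : Set B) = S := rfl

lemma circ_zero (a : B) : a * 0 = a := by
  have h := circ_add a 0 0
  rw [add_zero] at h
  exact (sub_eq_zero.mp (add_right_cancel (a := 0) (by rw [zero_add, ← h])).symm)

lemma zero_eq_one : (0 : B) = 1 := by
  simpa using circ_zero (1 : B)

lemma circ_neg (a b : B) : a * -b = a - a * b + a := by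
  have h := circ_add a b (-b)
  rw [add_neg_cancel, circ_zero] at h
  rw [eq_neg_add_of_add_eq h.symm, neg_sub]

def lamHom (a : B) : B →+ B :=
  AddMonoidHom.mk' (lam a) fun b c => by simp only [lam, circ_add, sub_eq_add_neg, add_assoc]

@[simp]
lemma lamHom_apply (a b : B) : lamHom a b = lam a b := rfl

lemma lam_mul (a b c : B) : lam (a * b) c = lam a (lam b c) := by
  simp only [lam, circ_add, circ_neg, mul_assoc, sub_eq_add_neg, add_assoc,
    neg_add_cancel_left, add_neg_cancel_left]

lemma lam_one (b : B) : lam 1 b = b := by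
  rw [lam, one_mul, ← zero_eq_one, neg_zero, zero_add]

lemma lam_lam_inv (a b : B) : lam a (lam a⁻¹ b) = b := by
  rw [← lam_mul, mul_inv_cancel, lam_one]

lemma lam_inv_lam (a b : B) : lam a⁻¹ (lam a b) = b := by
  rw [← lam_mul, inv_mul_cancel, lam_one]

lemma lam_inv_self (a : B) : lam a a⁻¹ = -a := by
  rw [lam, mul_inv_cancel, ← zero_eq_one, add_zero]

lemma circ_eq_add_lam (a b : B) : a * b = a + lam a b := by
  rw [lam, add_neg_cancel_left]

lemma starOp_eq_lam_sub (a b : B) : starOp a b = lam a b - b := rfl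

lemma starOp_circ (a y d : B) :
    starOp (a * y) d = starOp a (starOp y d) + starOp y d + starOp a d := by
  simp only [starOp_eq_lam_sub, lam_mul, sub_add_cancel]
  simp only [← lamHom_apply, map_sub, sub_add_sub_cancel]

lemma lam_starOp (a x y : B) : lam a (starOp x y) = starOp (a * x * a⁻¹) (lam a y) := by
  simp only [starOp_eq_lam_sub, ← lamHom_apply, map_sub]
  simp only [lamHom_apply, lam_mul, lam_inv_lam]

lemma add_starOp_add_neg (x b c : B) : b + starOp x c + -b = -starOp x b + starOp x (b + c) := by
  simp only [starOp_eq_lam_sub, ← lamHom_apply, map_add]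
  simp [sub_eq_add_neg, add_assoc]

lemma circ_conj_eq (a z : B) : a * z * a⁻¹ = a + (lam a z + lam a (starOp z a⁻¹)) + -a := by
  have h : z + starOp z a⁻¹ = z * a⁻¹ - a⁻¹ := by
    rw [starOp_eq_lam_sub, circ_eq_add_lam z, add_sub_assoc]
  simp only [← lamHom_apply, ← map_add, h, map_sub]
  rw [lamHom_apply, lamHom_apply, lam_inv_self, lam, mul_assoc]
  simp only [sub_neg_eq_add, add_assoc, add_neg_cancel_left, add_neg_cancel, add_zero]

variable (B) in
def rightPowSubgroup : ℕ → AddSubgroup B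
  | 0 => ⊤
  | n + 1 => AddSubgroup.closure {z | ∃ x ∈ rightPow B n, ∃ y ∈ (Set.univ : Set B), z = starOp x y}

@[simp]
lemma coe_rightPowSubgroup (n : ℕ) : (rightPowSubgroup B n : Set B) = rightPow B n := by
  cases n <;> rfl

lemma mem_rightPowSubgroup {n : ℕ} {x : B} : x ∈ rightPowSubgroup B n ↔ x ∈ rightPow B n := by
  rw [← SetLike.mem_coe, coe_rightPowSubgroup]

lemma rightPowSubgroup_succ_le (A : AddSubgroup B) {n : ℕ}
    (h : ∀ x ∈ rightPowSubgroup B n, ∀ y : B, starOp x y ∈ A) : rightPowSubgroup B (n + 1) ≤ A :=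
  (AddSubgroup.closure_le A).2 <| by
    rintro _ ⟨x, hx, y, -, rfl⟩
    exact h x (mem_rightPowSubgroup.2 hx) y

lemma starOp_mem_rightPowSubgroup_succ {n : ℕ} {x : B} (hx : x ∈ rightPowSubgroup B n) (y : B) :
    starOp x y ∈ rightPowSubgroup B (n + 1) :=
  AddSubgroup.subset_closure ⟨x, mem_rightPowSubgroup.1 hx, y, trivial, rfl⟩

lemma rightPowSubgroup_antitone : Antitone (rightPowSubgroup B) := by
  refine antitone_nat_of_succ_le fun n => ?_
  induction n with
  | zero => exact le_top
  | succ n ih =>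
    exact rightPowSubgroup_succ_le _ fun x hx y => starOp_mem_rightPowSubgroup_succ (ih hx) y

instance rightPowSubgroup_normal (n : ℕ) : (rightPowSubgroup B n).Normal := by
  cases n with
  | zero => exact AddSubgroup.normal_top
  | succ n =>
    refine ⟨fun z hz b => ?_⟩
    have hle := rightPowSubgroup_succ_le
      ((rightPowSubgroup B (n + 1)).comap (AddAut.addConj b).toAddMonoidHom) fun x hx c => by
        simp only [AddSubgroup.mem_comap, AddEquiv.coe_toAddMonoidHom, AddAut.addConj_apply,
          add_starOp_add_neg]
        exact add_mem (neg_mem (starOp_mem_rightPowSubgroup_succ hx b))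
          (starOp_mem_rightPowSubgroup_succ hx (b + c))
    simpa using hle hz

lemma circ_conj_mem_rightPowSubgroup {n : ℕ}
    (hlam : ∀ a, ∀ z ∈ rightPowSubgroup B n, lam a z ∈ rightPowSubgroup B n)
    (a : B) {z : B} (hz : z ∈ rightPowSubgroup B n) : a * z * a⁻¹ ∈ rightPowSubgroup B n := by
  rw [circ_conj_eq]
  have hstar := rightPowSubgroup_antitone n.le_succ (starOp_mem_rightPowSubgroup_succ hz a⁻¹)
  exact AddSubgroup.Normal.conj_mem inferInstance _ (add_mem (hlam a z hz) (hlam a _ hstar)) a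

lemma lam_mem_rightPowSubgroup (n : ℕ) (a : B) {z : B} (hz : z ∈ rightPowSubgroup B n) :
    lam a z ∈ rightPowSubgroup B n := by
  induction n generalizing a z with
  | zero => trivial
  | succ n ih =>
    have hle := rightPowSubgroup_succ_le ((rightPowSubgroup B (n + 1)).comap (lamHom a))
      fun x hx y => by
        rw [AddSubgroup.mem_comap, lamHom_apply, lam_starOp]
        exact starOp_mem_rightPowSubgroup_succ (circ_conj_mem_rightPowSubgroup ih a hx) _
    exact hle hz

section

variable {A : AddSubgroup B} (hA : ∀ a ∈ A, ∀ w : B, starOp a w ∈ A)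
include hA

lemma starOp_mem_sup_rightPowSubgroup_succ {m : ℕ} (hm : A ⊔ rightPowSubgroup B m = ⊤)
    (c d : B) : starOp c d ∈ A ⊔ rightPowSubgroup B (m + 1) := by
  have hc : c ∈ ((A ⊔ rightPowSubgroup B m : AddSubgroup B) : Set B) := by simp [hm]
  rw [AddSubgroup.add_normal, Set.mem_add] at hc
  obtain ⟨a, ha, y, hy, rfl⟩ := hc
  rw [← lam_lam_inv a y, ← circ_eq_add_lam, starOp_circ]
  exact add_mem (add_mem (AddSubgroup.mem_sup_left (hA a ha _))
      (AddSubgroup.mem_sup_right (starOp_mem_rightPowSubgroup_succ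
        (lam_mem_rightPowSubgroup m a⁻¹ hy) d)))
    (AddSubgroup.mem_sup_left (hA a ha d))

lemma sup_rightPowSubgroup_eq_top (h : A ⊔ rightPowSubgroup B 1 = ⊤) (m : ℕ) :
    A ⊔ rightPowSubgroup B m = ⊤ := by
  induction m with
  | zero => exact sup_top_eq A
  | succ m ih =>
    have hB2 : rightPowSubgroup B 1 ≤ A ⊔ rightPowSubgroup B (m + 1) :=
      rightPowSubgroup_succ_le _ fun c _ d => starOp_mem_sup_rightPowSubgroup_succ hA ih c d
    rw [eq_top_iff, ← h]
    exact sup_le le_sup_left hB2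

lemma eq_top_of_rightNilpotent (hr : RightNilpotent B) (h : A ⊔ rightPowSubgroup B 1 = ⊤) :
    A = ⊤ := by
  obtain ⟨n, hn⟩ := hr
  have hbot : rightPowSubgroup B n = ⊥ := by
    rw [← SetLike.coe_set_eq, coe_rightPowSubgroup, hn, AddSubgroup.coe_bot]
  simpa [hbot] using sup_rightPowSubgroup_eq_top hA h n

end

/-- Theorem 5.1: if `B` is a right nilpotent skew brace and `A` is a
sub skew brace with `A + B² = B` and `A * B ⊆ A`, then `A = B`.
Here `B² = B * B`. -/
theorem stmt17 {B : Type*} [SkewBrace B] (hr : RightNilpotent B)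
    (A : Set B) (hA : IsSubSkewBrace A)
    (hsum : ∀ b : B, ∃ a ∈ A, ∃ x ∈ starSpan (Set.univ : Set B) Set.univ, b = a + x)
    (hstar : starSpan A (Set.univ : Set B) ⊆ A) :
    A = Set.univ := by
  have hAstar : ∀ a ∈ hA.toAddSubgroup, ∀ w : B, starOp a w ∈ hA.toAddSubgroup :=
    fun a ha w => hstar (AddSubgroup.subset_closure ⟨a, ha, w, trivial, rfl⟩)
  have hAsum : hA.toAddSubgroup ⊔ rightPowSubgroup B 1 = ⊤ := by
    refine eq_top_iff.2 fun b _ => ?_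
    obtain ⟨a, ha, x, hx, rfl⟩ := hsum b
    exact add_mem (AddSubgroup.mem_sup_left ha)
      (AddSubgroup.mem_sup_right (mem_rightPowSubgroup.2 hx))
  simpa using congrArg SetLike.coe (eq_top_of_rightNilpotent hAstar hr hAsum)

end SkewBrace
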